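/- Let K be a field of prime characteristic p, for k ≥ 0 set τ_k = Σ_{r=0}^{k} X^{p^r + p^{2r}} ∈ K[X], and for i ≥ 1 let E_i ⊆ K[X] be the set of all polynomials X^j · ∂_{p^k}(τ_k) with 0 ≤ k ≤ i, j ≥ 0 and j + p^k ≤ p^i. Then the quotient dim_K(span_K E_i) / p^i tends to infinity as i → ∞. (This is the content of Theorem 3.2 of the paper: the D-module extension M of R = K[x] by R determined by g_r = x^{p^r + p^{2r}} is not holonomic, because for any K-filtration {M_i} of M one has F_{p^i} M_0 ⊇ span_K E_i · s_1, so dim_K M_{p^i} grows faster than linearly in p^i.) -/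

import Mathlib

/-!
For `k ≥ 1` the polynomial `∂_{p^k} τ_k` is monic of degree `p^{2k}`: its top coefficient is
`C(p^{2k} + p^k, p^k)`, which is `1` modulo `p` by Lucas' theorem. Hence for `i/2 ≤ k < i` and
`j < p^{i-1}` the elements `X^j ∂_{p^k} τ_k` of `E_i` have the pairwise distinct degrees
`p^{2k} + j ∈ [p^{2k}, p^{2k+1})`, so `dim span E_i ≥ ⌊i/2⌋ p^{i-1}`, and the quotient by `p^i`
is at least `⌊i/2⌋ / p`.
-/

open Polynomial Filter

theorem Nat.choose_pow_add_pow_modEq_one (p : ℕ) [Fact p.Prime] {m : ℕ} (hm : 0 < m) (k : ℕ) :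
    (p ^ (k + m) + p ^ k).choose (p ^ k) ≡ 1 [MOD p] := by
  induction k with
  | zero =>
    simpa using (Nat.modEq_zero_iff_dvd.2 (dvd_pow_self p hm.ne')).add_right 1
  | succ k ih =>
    rw [show p ^ (k + 1 + m) + p ^ (k + 1) = p * (p ^ (k + m) + p ^ k) by ring, pow_succ']
    exact Choose.choose_mul_mul_modEq_choose_nat.trans ih

theorem Nat.pow_add_injOn {p : ℕ} (hp : 1 < p) :
    Set.InjOn (fun x : ℕ × ℕ => p ^ x.1 + x.2) {x | x.2 < p ^ x.1} := by
  have hlog : ∀ x ∈ {x : ℕ × ℕ | x.2 < p ^ x.1}, Nat.log p (p ^ x.1 + x.2) = x.1 := by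
    rintro ⟨k, j⟩ (hj : j < p ^ k)
    have : p ^ k * 2 ≤ p ^ (k + 1) := by rw [pow_succ]; gcongr; omega
    exact Nat.log_eq_of_pow_le_of_lt_pow (by simp) (by dsimp only; omega)
  rintro ⟨k, j⟩ hx ⟨k', j'⟩ hx' h
  have hk : k = k' := by simpa [hlog _ hx, hlog _ hx'] using congrArg (Nat.log p) h
  subst hk
  simp_all

theorem Polynomial.linearIndependent_of_natDegree_injective {R ι : Type*} [Ring R]
    [NoZeroDivisors R] {v : ι → R[X]} (hv : ∀ i, v i ≠ 0)
    (hinj : Function.Injective (natDegree ∘ v)) : LinearIndependent R v := by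
  rw [linearIndependent_iff']
  intro s g hg i hi
  have hdeg : ∀ j, g j ≠ 0 → (g j • v j).degree = (v j).natDegree := fun j hj => by
    rw [smul_eq_C_mul, degree_C_mul hj, degree_eq_natDegree (hv j)]
  have hpair : Set.Pairwise {j | j ∈ s ∧ g j • v j ≠ 0}
      (Function.onFun Ne fun j => (g j • v j).degree) := by
    rintro a ⟨-, ha⟩ b ⟨-, hb⟩ hab
    simp only [Function.onFun, hdeg a (left_ne_zero_of_smul ha), hdeg b (left_ne_zero_of_smul hb),
      ne_eq, Nat.cast_inj]
    exact fun h => hab (hinj h)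
  have hsup := degree_sum_eq_of_disjoint _ s hpair
  rw [hg, degree_zero, eq_comm, Finset.sup_eq_bot_iff] at hsup
  simpa [hv i] using hsup i hi

theorem Polynomial.Monic.hasseDeriv_monic {R : Type*} [Semiring R] [Nontrivial R] {f : R[X]}
    (hf : f.Monic) {m n : ℕ} (hdeg : f.natDegree = m + n) (hc : ((m + n).choose n : R) = 1) :
    (hasseDeriv n f).Monic ∧ (hasseDeriv n f).natDegree = m := by
  have hcoeff : (hasseDeriv n f).coeff m = 1 := by
    rw [hasseDeriv_coeff, hc, ← hdeg, hf.coeff_natDegree, mul_one]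
  have hle : (hasseDeriv n f).natDegree ≤ m := (natDegree_hasseDeriv_le f n).trans (by omega)
  have hnat : (hasseDeriv n f).natDegree = m :=
    natDegree_eq_of_le_of_coeff_ne_zero hle (by simp [hcoeff])
  exact ⟨by rwa [Polynomial.Monic, Polynomial.leadingCoeff, hnat], hnat⟩

noncomputable section

variable (K : Type*)

def tau [Semiring K] (p k : ℕ) : K[X] := ∑ r ∈ Finset.range (k + 1), X ^ (p ^ r + p ^ (2 * r))

def E [Semiring K] (p i : ℕ) : Set K[X] :=
  {f | ∃ j k : ℕ, k ≤ i ∧ j + p ^ k ≤ p ^ i ∧ f = X ^ j * hasseDeriv (p ^ k) (tau K p k)}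

section Semiring

variable [Semiring K] {p : ℕ}

theorem finite_E (i : ℕ) : (E K p i).Finite := by
  refine (((Set.finite_Iic i).prod (Set.finite_Iic (p ^ i))).image
    fun x : ℕ × ℕ => X ^ x.2 * hasseDeriv (p ^ x.1) (tau K p x.1)).subset ?_
  rintro _ ⟨j, k, hk, hj, rfl⟩
  exact ⟨(k, j), ⟨hk, by simp only [Set.mem_Iic]; omega⟩, rfl⟩

theorem X_pow_mul_hasseDeriv_tau_mem_E {i j k : ℕ} (hp : 2 ≤ p) (hki : k < i)
    (hj : j < p ^ (i - 1)) : X ^ j * hasseDeriv (p ^ k) (tau K p k) ∈ E K p i := by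
  refine ⟨j, k, hki.le, ?_, rfl⟩
  have : p ^ k ≤ p ^ (i - 1) := Nat.pow_le_pow_right (by omega) (by omega)
  have : p ^ (i - 1) * 2 ≤ p ^ i := by
    rw [show i = i - 1 + 1 by omega, pow_succ, Nat.add_sub_cancel]; gcongr
  omega

variable [Nontrivial K]

theorem tau_monic (hp : 1 < p) (k : ℕ) :
    (tau K p k).Monic ∧ (tau K p k).natDegree = p ^ k + p ^ (2 * k) := by
  induction k with
  | zero => simp [tau]
  | succ k ih =>
    have hdeg : (tau K p k).degree < (X ^ (p ^ (k + 1) + p ^ (2 * (k + 1))) : K[X]).degree := by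
      refine degree_lt_degree ?_
      rw [ih.2, natDegree_X_pow]
      have := Nat.pow_lt_pow_right hp k.lt_add_one
      have := Nat.pow_lt_pow_right hp (show 2 * k < 2 * (k + 1) by omega)
      omega
    rw [tau, Finset.sum_range_succ, ← tau]
    exact ⟨(monic_X_pow _).add_of_right hdeg, by
      rw [natDegree_add_eq_right_of_degree_lt hdeg, natDegree_X_pow]⟩

variable {K} [CharP K p] [Fact p.Prime]

theorem hasseDeriv_tau_monic {k : ℕ} (hk : 0 < k) :
    (hasseDeriv (p ^ k) (tau K p k)).Monic ∧
      (hasseDeriv (p ^ k) (tau K p k)).natDegree = p ^ (2 * k) := by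
  obtain ⟨hmonic, hdeg⟩ := tau_monic K (Fact.out : p.Prime).one_lt k
  refine hmonic.hasseDeriv_monic (by rw [hdeg, add_comm]) ?_
  rw [two_mul, CharP.natCast_eq_natCast' K p (Nat.choose_pow_add_pow_modEq_one p hk k),
    Nat.cast_one]

end Semiring

section Field

variable {K} [Field K] {p : ℕ} [CharP K p] [Fact p.Prime]

theorem card_le_finrank_span_E (i : ℕ) :
    i / 2 * p ^ (i - 1) ≤ Module.finrank K (Submodule.span K (E K p i)) := by
  have hp : p.Prime := Fact.out
  set s := Finset.Ico (i - i / 2) i ×ˢ Finset.range (p ^ (i - 1))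
  have hs : ∀ x ∈ s, 0 < x.1 ∧ x.1 < i ∧ i ≤ 2 * x.1 ∧ x.2 < p ^ (i - 1) := by
    intro x hx
    simp only [s, Finset.mem_product, Finset.mem_Ico, Finset.mem_range] at hx
    omega
  let v : s → K[X] := fun x => X ^ x.1.2 * hasseDeriv (p ^ x.1.1) (tau K p x.1.1)
  have hv : ∀ x, (v x).Monic ∧ (v x).natDegree = p ^ (2 * x.1.1) + x.1.2 := fun x => by
    obtain ⟨hmonic, hdeg⟩ := hasseDeriv_tau_monic (K := K) (hs x x.2).1
    exact ⟨(monic_X_pow _).mul hmonic, by rw [(monic_X_pow _).natDegree_mul hmonic,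
      natDegree_X_pow, hdeg, add_comm]⟩
  have hinj : Function.Injective (natDegree ∘ v) := by
    rintro ⟨⟨k, j⟩, hx⟩ ⟨⟨k', j'⟩, hx'⟩ h
    have hlt : ∀ {k j}, (k, j) ∈ s → (2 * k, j) ∈ {x : ℕ × ℕ | x.2 < p ^ x.1} := fun hx =>
      (hs _ hx).2.2.2.trans_le (Nat.pow_le_pow_right hp.pos (by have := hs _ hx; omega))
    have := Nat.pow_add_injOn hp.one_lt (hlt hx) (hlt hx')
      (by simpa only [Function.comp, (hv _).2] using h)
    simp only [Prod.mk.injEq] at this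
    ext <;> simp only <;> omega
  have hindep := linearIndependent_of_natDegree_injective (fun x => (hv x).1.ne_zero) hinj
  have hvE : Set.range v ⊆ E K p i := by
    rintro _ ⟨x, rfl⟩
    exact X_pow_mul_hasseDeriv_tau_mem_E K hp.two_le (hs x x.2).2.1 (hs x x.2).2.2.2
  have := FiniteDimensional.span_of_finite K (finite_E K (p := p) i)
  calc i / 2 * p ^ (i - 1) = Fintype.card s := by
        rw [Fintype.card_coe, Finset.card_product, Nat.card_Ico, Finset.card_range,
          Nat.sub_sub_self (Nat.div_le_self i 2)]
    _ = Module.finrank K (Submodule.span K (Set.range v)) := (finrank_span_eq_card hindep).symm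
    _ ≤ Module.finrank K (Submodule.span K (E K p i)) :=
      Submodule.finrank_mono (Submodule.span_mono hvE)

end Field

end

/-- Theorem 3.2 of the paper (key estimate): with
`τ_k = Σ_{r=0}^{k} X^{p^r + p^{2r}}` in `K[X]` and `E_i` the set of all polynomials
`X^j · ∂_{p^k}(τ_k)` with `0 ≤ k ≤ i` and `j + p^k ≤ p^i`, the quotient
`dim_K(span_K E_i) / p^i` tends to infinity as `i → ∞`.  Hence the corresponding
`D`-module extension of `R` by `R` is not holonomic. -/
theorem dim_span_E_div_tendsto_atTop (K : Type*) [Field K] (p : ℕ) [Fact p.Prime]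
    [CharP K p] :
    Filter.Tendsto
      (fun i : ℕ =>
        (Module.finrank K
          (Submodule.span K
            {f : K[X] | ∃ j k : ℕ, k ≤ i ∧ j + p ^ k ≤ p ^ i ∧
              f = X ^ j * Polynomial.hasseDeriv (p ^ k)
                (∑ r ∈ Finset.range (k + 1), (X : K[X]) ^ (p ^ r + p ^ (2 * r)))}) : ℝ)
          / (p : ℝ) ^ i)
      Filter.atTop Filter.atTop := by
  change Tendsto (fun i => (Module.finrank K (Submodule.span K (E K p i)) : ℝ) / p ^ i) atTop atTop
  have hp : (0 : ℝ) < p := by exact_mod_cast (Fact.out : p.Prime).pos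
  have hlower : Tendsto (fun i : ℕ => ((i / 2 : ℕ) : ℝ) / p) atTop atTop :=
    (tendsto_natCast_atTop_atTop.comp (Nat.tendsto_div_const_atTop two_ne_zero)).atTop_div_const hp
  refine tendsto_atTop_mono' _ ?_ hlower
  filter_upwards [eventually_ge_atTop 1] with i hi
  have hpow : (p : ℝ) ^ i = p ^ (i - 1) * p := by rw [← pow_succ, Nat.sub_add_cancel hi]
  calc ((i / 2 : ℕ) : ℝ) / p = ((i / 2 * p ^ (i - 1) : ℕ) : ℝ) / p ^ i := by
        rw [hpow]
        push_cast
        field_simp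
    _ ≤ _ := by gcongr; exact_mod_cast card_le_finrank_span_E i
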